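/- Let A be a q×n and W a nonzero n×q complex matrix with weighted core-EP decomposition A = U·[[A₁, A₂],[0, A₃]]·V^* and W = V·[[W₁, W₂],[0, W₃]]·U^* (U, V unitary; A₁, W₁ nonsingular t×t; A₃W₃ and W₃A₃ nilpotent). For m ≥ 1 set B_m = Σ_{j=0}^{m-1} (W₁A₁)^j (W₁A₂ + W₂A₃)(W₃A₃)^{m-1-j}. Then A^{Ⓦ_m,W,†} = V·[[A₁^{-1}, (W₁A₁)^{-1}W₂A₃A₃^† + (W₁A₁)^{-(m+1)}B_m W₃ A₃ A₃^†],[0, 0]]·U^*. -/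

import Mathlib

open Matrix

/-- Index of a square matrix: least `d` with `rank (B^d) = rank (B^(d+1))`. -/
noncomputable def matInd {ι : Type*} [Fintype ι] [DecidableEq ι] (B : Matrix ι ι ℂ) : ℕ :=
  sInf {d : ℕ | (B ^ d).rank = (B ^ (d + 1)).rank}

/-- `X` is the Moore-Penrose inverse of `A` (four Penrose equations). -/
noncomputable def IsMP {ι κ : Type*} [Fintype ι] [Fintype κ] (A : Matrix ι κ ℂ) (X : Matrix κ ι ℂ) : Prop :=
  A * X * A = A ∧ X * A * X = X ∧ (A * X)ᴴ = A * X ∧ (X * A)ᴴ = X * A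

/-- Column space (range) of a matrix. -/
noncomputable def mrange {ι κ : Type*} [Fintype κ] (M : Matrix ι κ ℂ) : Submodule ℂ (ι → ℂ) :=
  LinearMap.range M.mulVecLin

/-- Null space of a matrix. -/
noncomputable def mker {ι κ : Type*} [Fintype κ] (M : Matrix ι κ ℂ) : Submodule ℂ (κ → ℂ) :=
  LinearMap.ker M.mulVecLin

/-- `X` is the core-EP inverse of `B`. -/
noncomputable def IsCoreEP {ι : Type*} [Fintype ι] [DecidableEq ι] (B X : Matrix ι ι ℂ) : Prop :=
  X * B * X = X ∧ mrange X = mrange (B ^ matInd B) ∧ mrange Xᴴ = mrange (B ^ matInd B)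

/-- `X` is the Drazin inverse of `B`. -/
noncomputable def IsDrazin {ι : Type*} [Fintype ι] [DecidableEq ι] (B X : Matrix ι ι ℂ) : Prop :=
  X * B * X = X ∧ B * X = X * B ∧ B ^ (matInd B + 1) * X = B ^ matInd B

/-- `X` is the group inverse of `B`. -/
noncomputable def IsGroupInv {ι : Type*} [Fintype ι] (B X : Matrix ι ι ℂ) : Prop :=
  B * X * B = B ∧ X * B * X = X ∧ B * X = X * B

/-- Frobenius norm of a matrix. -/
noncomputable def frobNorm {ι κ : Type*} [Fintype ι] [Fintype κ] (M : Matrix ι κ ℂ) : ℝ :=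
  Real.sqrt (∑ i, ∑ j, ‖M i j‖ ^ 2)

set_option linter.unusedSectionVars false

section Helpers
section Aux
variable {ι κ μ : Type*} [Fintype ι] [Fintype κ] [Fintype μ]

lemma mrange_mul_le (M : Matrix ι κ ℂ) (N : Matrix κ μ ℂ) :
    mrange (M * N) ≤ mrange M := by
  rw [mrange, mrange, Matrix.mulVecLin_mul]
  exact LinearMap.range_comp_le_range _ _

lemma mrange_mul (M : Matrix ι κ ℂ) (N : Matrix κ μ ℂ) :
    mrange (M * N) = (mrange N).map M.mulVecLin := by
  rw [mrange, mrange, Matrix.mulVecLin_mul, LinearMap.range_comp]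

lemma exists_factor {M : Matrix ι μ ℂ} {X : Matrix ι κ ℂ}
    [DecidableEq μ] (h : mrange M ≤ mrange X) : ∃ C : Matrix κ μ ℂ, M = X * C := by
  have hcol : ∀ j : μ, (fun i => M i j) ∈ mrange X := by
    intro j
    apply h
    refine ⟨Pi.single j 1, ?_⟩
    ext i
    simp [Matrix.mulVecLin_apply, Matrix.mulVec, dotProduct, Pi.single_apply]
  choose c hc using hcol
  refine ⟨Matrix.of fun k j => c j k, ?_⟩
  ext i j
  have := congrFun (hc j) i
  simp only [Matrix.mulVecLin_apply, Matrix.mulVec, dotProduct] at this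
  simp [Matrix.mul_apply, ← this]

lemma mrange_mul_isUnit (M : Matrix ι κ ℂ) (P : Matrix κ κ ℂ) [DecidableEq κ]
    (hP : IsUnit P.det) : mrange (M * P) = mrange M := by
  refine le_antisymm (mrange_mul_le M P) ?_
  have : M = (M * P) * P⁻¹ := by
    rw [Matrix.mul_assoc, Matrix.mul_nonsing_inv _ hP, Matrix.mul_one]
  nth_rewrite 1 [this]
  exact mrange_mul_le _ _

end Aux

section Aux2
variable {a b c d e f : Type*} [Fintype a] [Fintype b] [Fintype c] [Fintype d] [Fintype e]
  [DecidableEq c] [DecidableEq a]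

lemma sand3 (P : Matrix a b ℂ) (M : Matrix b c ℂ) (Q : Matrix c d ℂ) (Q' : Matrix d c ℂ)
    (M' : Matrix c e ℂ) (R : Matrix e f ℂ) (h : Q * Q' = 1) :
    (P * M * Q) * (Q' * M' * R) = P * (M * M') * R := by
  simp only [Matrix.mul_assoc]
  rw [← Matrix.mul_assoc Q Q' (M' * R), h, Matrix.one_mul]

lemma sandwich_pow (V : Matrix a a ℂ) (V' : Matrix a a ℂ) (M : Matrix a a ℂ)
    (h1 : V * V' = 1) (h2 : V' * V = 1) (n : ℕ) :
    (V * M * V') ^ n = V * M ^ n * V' := by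
  induction n with
  | zero => rw [pow_zero, pow_zero, Matrix.mul_one, h1]
  | succ n ih => rw [pow_succ, ih, pow_succ, sand3 V (M ^ n) V' V M V' h2, Matrix.mul_assoc V _ V']

end Aux2

section Aux3
variable {p q : Type*} [Fintype p] [Fintype q] [DecidableEq p] [DecidableEq q]

lemma pow_triangular (T₁ : Matrix p p ℂ) (T₂ : Matrix p q ℂ) (N : Matrix q q ℂ) (d : ℕ) :
    (fromBlocks T₁ T₂ 0 N) ^ d =
      fromBlocks (T₁ ^ d) (∑ j ∈ Finset.range d, T₁ ^ j * T₂ * N ^ (d - 1 - j)) 0 (N ^ d) := by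
  induction d with
  | zero => simp [Matrix.fromBlocks_one]
  | succ d ih =>
    rw [pow_succ, ih, Matrix.fromBlocks_multiply]
    have hTR : T₁ ^ d * T₂ + (∑ j ∈ Finset.range d, T₁ ^ j * T₂ * N ^ (d - 1 - j)) * N
        = ∑ j ∈ Finset.range (d + 1), T₁ ^ j * T₂ * N ^ (d + 1 - 1 - j) := by
      have hsum : (∑ j ∈ Finset.range d, T₁ ^ j * T₂ * N ^ (d - 1 - j)) * N
          = ∑ j ∈ Finset.range d, T₁ ^ j * T₂ * N ^ (d + 1 - 1 - j) := by
        rw [Matrix.sum_mul]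
        refine Finset.sum_congr rfl fun j hj => ?_
        rw [Matrix.mul_assoc, ← pow_succ]
        congr 2
        simp only [Finset.mem_range] at hj
        omega
      rw [hsum, Finset.sum_range_succ, add_comm]
      congr 1
      simp
    rw [hTR, Matrix.mul_zero, add_zero, ← pow_succ, Matrix.zero_mul, Matrix.mul_zero, add_zero,
      Matrix.zero_mul, zero_add, ← pow_succ]

lemma pow_block_succ (P : Matrix p p ℂ) (Q : Matrix p q ℂ) (k : ℕ) :
    (fromBlocks P Q 0 0 : Matrix (p ⊕ q) (p ⊕ q) ℂ) ^ (k + 1) =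
      fromBlocks (P ^ (k + 1)) (P ^ k * Q) 0 0 := by
  induction k with
  | zero => simp
  | succ k ih =>
    rw [pow_succ, ih, Matrix.fromBlocks_multiply]
    simp [← pow_succ]

end Aux3

end Helpers

theorem stmt11 {t q' n' : ℕ}
    (U : Matrix (Fin t ⊕ Fin q') (Fin t ⊕ Fin q') ℂ)
    (V : Matrix (Fin t ⊕ Fin n') (Fin t ⊕ Fin n') ℂ)
    (hU : U * Uᴴ = 1 ∧ Uᴴ * U = 1) (hV : V * Vᴴ = 1 ∧ Vᴴ * V = 1)
    (A₁ : Matrix (Fin t) (Fin t) ℂ) (A₂ : Matrix (Fin t) (Fin n') ℂ)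
    (A₃ : Matrix (Fin q') (Fin n') ℂ)
    (W₁ : Matrix (Fin t) (Fin t) ℂ) (W₂ : Matrix (Fin t) (Fin q') ℂ)
    (W₃ : Matrix (Fin n') (Fin q') ℂ)
    (hA₁ : IsUnit A₁.det) (hW₁ : IsUnit W₁.det)
    (hnil₁ : IsNilpotent (A₃ * W₃)) (hnil₂ : IsNilpotent (W₃ * A₃))
    (A : Matrix (Fin t ⊕ Fin q') (Fin t ⊕ Fin n') ℂ)
    (W : Matrix (Fin t ⊕ Fin n') (Fin t ⊕ Fin q') ℂ) (hW : W ≠ 0)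
    (hA : A = U * Matrix.fromBlocks A₁ A₂ 0 A₃ * Vᴴ)
    (hWdec : W = V * Matrix.fromBlocks W₁ W₂ 0 W₃ * Uᴴ)
    (m : ℕ) (hm : 0 < m)
    (Bm : Matrix (Fin t) (Fin n') ℂ)
    (hBm : Bm = ∑ j ∈ Finset.range m,
      (W₁ * A₁) ^ j * (W₁ * A₂ + W₂ * A₃) * (W₃ * A₃) ^ (m - 1 - j))
    (Adag : Matrix (Fin t ⊕ Fin n') (Fin t ⊕ Fin q') ℂ) (hAdag : IsMP A Adag)
    (A₃dag : Matrix (Fin n') (Fin q') ℂ) (hA₃dag : IsMP A₃ A₃dag)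
    (WAcep : Matrix (Fin t ⊕ Fin n') (Fin t ⊕ Fin n') ℂ) (hWAcep : IsCoreEP (W * A) WAcep)
    (AepW AWGm : Matrix (Fin t ⊕ Fin q') (Fin t ⊕ Fin n') ℂ)
    (AWGMP : Matrix (Fin t ⊕ Fin n') (Fin t ⊕ Fin q') ℂ)
    (hAepW : AepW = A * (WAcep * WAcep))
    (hAWGm : AWGm = (AepW * W) ^ m * AepW * (W * A) ^ m)
    (hAWGMP : AWGMP = W * AWGm * W * A * Adag) :
    AWGMP = V * (Matrix.fromBlocks A₁⁻¹
      ((W₁ * A₁)⁻¹ * (W₂ * (A₃ * A₃dag)) +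
        ((W₁ * A₁) ^ (m + 1))⁻¹ * (Bm * (W₃ * (A₃ * A₃dag)))) 0 0 :
          Matrix (Fin t ⊕ Fin n') (Fin t ⊕ Fin q') ℂ) * Uᴴ := by
  obtain ⟨hU1, hU2⟩ := hU
  obtain ⟨hV1, hV2⟩ := hV
  have hdT₁ : IsUnit (W₁ * A₁).det := by rw [Matrix.det_mul]; exact hW₁.mul hA₁
  set T₁ := W₁ * A₁ with hT₁def
  set T₂ := W₁ * A₂ + W₂ * A₃ with hT₂def
  set N := W₃ * A₃ with hNdef
  have hdVH : IsUnit Vᴴ.det := by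
    apply IsUnit.of_mul_eq_one V.det
    rw [← Matrix.det_mul, hV2, Matrix.det_one]
  have hdT₁k : ∀ d : ℕ, IsUnit ((T₁ ^ d)).det := fun d => by
    rw [Matrix.det_pow]; exact hdT₁.pow d
  have hdT₁H : IsUnit (T₁ᴴ).det := by
    rw [Matrix.det_conjTranspose]; exact hdT₁.star
  -- canonical form of W * A
  have hWA : W * A = V * Matrix.fromBlocks T₁ T₂ 0 N * Vᴴ := by
    rw [hA, hWdec, sand3 V (Matrix.fromBlocks W₁ W₂ 0 W₃) Uᴴ U (Matrix.fromBlocks A₁ A₂ 0 A₃) Vᴴ hU2,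
      Matrix.fromBlocks_multiply]
    simp [hT₁def, hT₂def, hNdef]
  have hTpow : ∀ d : ℕ, (W * A) ^ d = V * Matrix.fromBlocks (T₁ ^ d)
      (∑ j ∈ Finset.range d, T₁ ^ j * T₂ * N ^ (d - 1 - j)) 0 (N ^ d) * Vᴴ := by
    intro d
    rw [hWA, sandwich_pow V Vᴴ _ hV1 hV2, pow_triangular]
  -- canonical form of A * Adag
  have hA₃1 : A₃ * A₃dag * A₃ = A₃ := hA₃dag.1
  have hPA : A * Adag = U * Matrix.fromBlocks 1 0 0 (A₃ * A₃dag) * Uᴴ := by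
    set P := U * Matrix.fromBlocks 1 0 0 (A₃ * A₃dag) * Uᴴ with hPdef
    have hPA' : P * A = A := by
      rw [hPdef, hA, sand3 U _ Uᴴ U _ Vᴴ hU2, Matrix.fromBlocks_multiply]
      simp [hA₃1]
    have hPfact : P = A * (V * Matrix.fromBlocks A₁⁻¹ (-(A₁⁻¹ * (A₂ * A₃dag))) 0 A₃dag * Uᴴ) := by
      rw [hPdef, hA, sand3 U _ Vᴴ V _ Uᴴ hV2, Matrix.fromBlocks_multiply]
      simp [Matrix.mul_neg, ← Matrix.mul_assoc, Matrix.mul_nonsing_inv _ hA₁]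
    have hQP : A * Adag * P = P := by
      conv_lhs => rw [hPfact]
      rw [← Matrix.mul_assoc, hAdag.1, ← hPfact]
    have hPQ : P * (A * Adag) = A * Adag := by rw [← Matrix.mul_assoc, hPA']
    have hPH : Pᴴ = P := by
      rw [hPdef]
      simp only [Matrix.conjTranspose_mul, Matrix.conjTranspose_conjTranspose,
        Matrix.fromBlocks_conjTranspose, Matrix.conjTranspose_one, Matrix.conjTranspose_zero,
        hA₃dag.2.2.1, Matrix.mul_assoc]
    have hfin : P = A * Adag :=
      calc P = Pᴴ := hPH.symm
        _ = (A * Adag * P)ᴴ := by rw [hQP]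
        _ = Pᴴ * (A * Adag)ᴴ := by rw [Matrix.conjTranspose_mul]
        _ = P * (A * Adag) := by rw [hPH, hAdag.2.2.1]
        _ = A * Adag := hPQ
    exact hfin.symm
  -- canonical form of WAcep
  obtain ⟨hX1, hX2, hX3⟩ := hWAcep
  set Y := V * Matrix.fromBlocks T₁⁻¹ 0 0 0 * Vᴴ with hYdef
  have hYTY : Y * (W * A) * Y = Y := by
    have hbl : Matrix.fromBlocks T₁⁻¹ 0 0 0 * Matrix.fromBlocks T₁ T₂ 0 N *
        Matrix.fromBlocks T₁⁻¹ 0 0 0 = Matrix.fromBlocks T₁⁻¹ 0 0 0 := by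
      rw [Matrix.fromBlocks_multiply, Matrix.fromBlocks_multiply]
      simp [Matrix.nonsing_inv_mul _ hdT₁]
    rw [hYdef, hWA, sand3 V _ Vᴴ V _ Vᴴ hV2, sand3 V _ Vᴴ V _ Vᴴ hV2, hbl]
  have hYle : mrange Y ≤ mrange WAcep := by
    rw [hX2]
    have hfac : Y = (W * A) ^ matInd (W * A) *
        (V * Matrix.fromBlocks ((T₁ ^ matInd (W * A))⁻¹ * T₁⁻¹) 0 0 0 * Vᴴ) := by
      have hbl : Matrix.fromBlocks (T₁ ^ matInd (W * A))
          (∑ j ∈ Finset.range (matInd (W * A)), T₁ ^ j * T₂ * N ^ (matInd (W * A) - 1 - j))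
          0 (N ^ matInd (W * A)) *
          Matrix.fromBlocks ((T₁ ^ matInd (W * A))⁻¹ * T₁⁻¹) 0 0 0 =
          Matrix.fromBlocks T₁⁻¹ 0 0 0 := by
        rw [Matrix.fromBlocks_multiply]
        simp [← Matrix.mul_assoc, Matrix.mul_nonsing_inv _ (hdT₁k _)]
      rw [hTpow, sand3 V _ Vᴴ V _ Vᴴ hV2, hbl, hYdef]
    rw [hfac]
    exact mrange_mul_le _ _
  obtain ⟨C, hC⟩ := exists_factor hYle
  obtain ⟨k₀, hk₀⟩ := hnil₂
  have hNd : ∀ d, k₀ ≤ d → N ^ d = 0 := by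
    intro d hd
    rw [← Nat.sub_add_cancel hd, pow_add, hk₀, Matrix.mul_zero]
  set E : Matrix (Fin t ⊕ Fin n') (Fin t ⊕ Fin n') ℂ := Matrix.fromBlocks 1 0 0 0 with hEdef
  have hfact : ∀ d, k₀ ≤ d → (W * A) ^ d = (V * E) *
      (Matrix.fromBlocks (T₁ ^ d) (∑ j ∈ Finset.range d, T₁ ^ j * T₂ * N ^ (d - 1 - j)) 0 1 * Vᴴ) := by
    intro d hd
    rw [hTpow d, hNd d hd]
    have hE : E * Matrix.fromBlocks (T₁ ^ d)
        (∑ j ∈ Finset.range d, T₁ ^ j * T₂ * N ^ (d - 1 - j)) 0 1 =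
        Matrix.fromBlocks (T₁ ^ d) (∑ j ∈ Finset.range d, T₁ ^ j * T₂ * N ^ (d - 1 - j)) 0 0 := by
      rw [hEdef, Matrix.fromBlocks_multiply]
      simp
    rw [← hE]
    simp [Matrix.mul_assoc]
  have hdetF : ∀ d, IsUnit ((Matrix.fromBlocks (T₁ ^ d)
      (∑ j ∈ Finset.range d, T₁ ^ j * T₂ * N ^ (d - 1 - j)) 0 1 * Vᴴ)).det := by
    intro d
    rw [Matrix.det_mul, Matrix.det_fromBlocks_zero₂₁, Matrix.det_one, mul_one]
    exact (hdT₁k d).mul hdVH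
  have hrk : ∀ d, k₀ ≤ d → ((W * A) ^ d).rank = (V * E).rank := by
    intro d hd
    rw [hfact d hd]
    exact Matrix.rank_mul_eq_left_of_isUnit_det _ _ (hdetF d)
  have hk₀mem : k₀ ∈ {d : ℕ | ((W * A) ^ d).rank = ((W * A) ^ (d + 1)).rank} := by
    simp only [Set.mem_setOf_eq]
    rw [hrk k₀ le_rfl, hrk (k₀ + 1) (Nat.le_succ k₀)]
  have hmem : matInd (W * A) ∈ {d : ℕ | ((W * A) ^ d).rank = ((W * A) ^ (d + 1)).rank} :=
    Nat.sInf_mem ⟨k₀, hk₀mem⟩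
  have hkle : matInd (W * A) ≤ k₀ := Nat.sInf_le hk₀mem
  have hstep : mrange ((W * A) ^ (matInd (W * A) + 1)) = mrange ((W * A) ^ matInd (W * A)) := by
    apply Submodule.eq_of_le_of_finrank_le
    · rw [pow_succ]; exact mrange_mul_le _ _
    · exact le_of_eq hmem
  have hstab : ∀ j, mrange ((W * A) ^ (matInd (W * A) + j)) = mrange ((W * A) ^ matInd (W * A)) := by
    intro j
    induction j with
    | zero => rfl
    | succ j ih =>
      have e : matInd (W * A) + (j + 1) = (matInd (W * A) + j) + 1 := rfl
      rw [e, pow_succ', mrange_mul, ih, ← mrange_mul, ← pow_succ', hstep]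
  have hrange_k₀ : mrange ((W * A) ^ matInd (W * A)) = mrange ((W * A) ^ k₀) := by
    have h := hstab (k₀ - matInd (W * A))
    rw [Nat.add_sub_cancel' hkle] at h
    exact h.symm
  have hYH : Yᴴ = V * Matrix.fromBlocks (T₁ᴴ)⁻¹ 0 0 0 * Vᴴ := by
    rw [hYdef]
    simp only [Matrix.conjTranspose_mul, Matrix.conjTranspose_conjTranspose,
      Matrix.fromBlocks_conjTranspose, Matrix.conjTranspose_zero,
      Matrix.conjTranspose_nonsing_inv, Matrix.mul_assoc]
  have hk₀le : mrange ((W * A) ^ k₀) ≤ mrange Yᴴ := by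
    have hfac : (W * A) ^ k₀ = Yᴴ * (V * Matrix.fromBlocks (T₁ᴴ * T₁ ^ k₀)
        (T₁ᴴ * ∑ j ∈ Finset.range k₀, T₁ ^ j * T₂ * N ^ (k₀ - 1 - j))
        (0 : Matrix (Fin n') (Fin t) ℂ) (0 : Matrix (Fin n') (Fin n') ℂ) * Vᴴ) := by
      have hbl : Matrix.fromBlocks (T₁ᴴ)⁻¹ (0 : Matrix (Fin t) (Fin n') ℂ)
          (0 : Matrix (Fin n') (Fin t) ℂ) (0 : Matrix (Fin n') (Fin n') ℂ) *
          Matrix.fromBlocks (T₁ᴴ * T₁ ^ k₀)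
            (T₁ᴴ * ∑ j ∈ Finset.range k₀, T₁ ^ j * T₂ * N ^ (k₀ - 1 - j))
            (0 : Matrix (Fin n') (Fin t) ℂ) (0 : Matrix (Fin n') (Fin n') ℂ) =
          Matrix.fromBlocks (T₁ ^ k₀)
            (∑ j ∈ Finset.range k₀, T₁ ^ j * T₂ * N ^ (k₀ - 1 - j))
            (0 : Matrix (Fin n') (Fin t) ℂ) (0 : Matrix (Fin n') (Fin n') ℂ) := by
        rw [Matrix.fromBlocks_multiply]
        simp [← Matrix.mul_assoc, Matrix.nonsing_inv_mul _ hdT₁H]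
      rw [hYH, sand3 V _ Vᴴ V _ Vᴴ hV2, hbl, hTpow k₀, hNd k₀ le_rfl]
    rw [hfac]
    exact mrange_mul_le _ _
  have hXHle : mrange WAcepᴴ ≤ mrange Yᴴ := by
    rw [hX3, hrange_k₀]; exact hk₀le
  obtain ⟨D, hD⟩ := exists_factor hXHle
  have hXDY : WAcep = Dᴴ * Y := by
    have h := congrArg Matrix.conjTranspose hD
    simpa [Matrix.conjTranspose_mul] using h
  have e1 : WAcep * (W * A) * Y = Y := by
    rw [hC, ← Matrix.mul_assoc, hX1]
  have e2 : WAcep * (W * A) * Y = WAcep := by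
    calc WAcep * (W * A) * Y = Dᴴ * (Y * (W * A) * Y) := by
          rw [hXDY]; simp only [Matrix.mul_assoc]
      _ = Dᴴ * Y := by rw [hYTY]
      _ = WAcep := hXDY.symm
  have hcep : WAcep = Y := e2.symm.trans e1
  -- the explicit computation
  obtain ⟨km, rfl⟩ : ∃ km, m = km + 1 := ⟨m - 1, by omega⟩
  set G := A₁ * (T₁⁻¹ * T₁⁻¹) with hGdef
  have hW₁G : W₁ * G = T₁⁻¹ := by
    rw [hGdef, ← Matrix.mul_assoc, ← Matrix.mul_assoc, ← hT₁def,
      Matrix.mul_nonsing_inv _ hdT₁, Matrix.one_mul]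
  have hGT : G * T₁ = W₁⁻¹ := by
    rw [hGdef, Matrix.mul_assoc, Matrix.mul_assoc, Matrix.nonsing_inv_mul _ hdT₁, Matrix.mul_one,
      hT₁def, Matrix.mul_inv_rev, ← Matrix.mul_assoc, Matrix.mul_nonsing_inv _ hA₁, Matrix.one_mul]
  have hM₁ : ∀ j, (G * W₁) ^ j * G * T₁ ^ j = G := by
    intro j
    induction j with
    | zero => simp
    | succ j ih =>
      rw [pow_succ, pow_succ']
      calc (G * W₁) ^ j * (G * W₁) * G * (T₁ * T₁ ^ j)
          = (G * W₁) ^ j * (G * (W₁ * G) * T₁) * T₁ ^ j := by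
            simp only [Matrix.mul_assoc]
        _ = (G * W₁) ^ j * G * T₁ ^ j := by
            rw [hW₁G, Matrix.mul_assoc G T₁⁻¹ T₁, Matrix.nonsing_inv_mul _ hdT₁, Matrix.mul_one]
        _ = G := ih
  have hTW : ∀ j, T₁ ^ j * W₁ * (G * W₁) ^ j = W₁ := by
    intro j
    induction j with
    | zero => simp
    | succ j ih =>
      rw [pow_succ, pow_succ']
      calc T₁ ^ j * T₁ * W₁ * (G * W₁ * (G * W₁) ^ j)
          = T₁ ^ j * (T₁ * (W₁ * G) * W₁) * (G * W₁) ^ j := by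
            simp only [Matrix.mul_assoc]
        _ = T₁ ^ j * W₁ * (G * W₁) ^ j := by
            rw [hW₁G, Matrix.mul_nonsing_inv _ hdT₁, Matrix.one_mul, Matrix.mul_assoc]
        _ = W₁ := ih
  have hK2 : W₁ * ((G * W₁) ^ (km + 1) * G) = (T₁ ^ (km + 1 + 1))⁻¹ := by
    symm
    apply Matrix.inv_eq_right_inv
    calc T₁ ^ (km + 1 + 1) * (W₁ * ((G * W₁) ^ (km + 1) * G))
        = T₁ * (T₁ ^ (km + 1) * W₁ * (G * W₁) ^ (km + 1)) * G := by
          rw [pow_succ']; simp only [Matrix.mul_assoc]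
      _ = T₁ * W₁ * G := by rw [hTW]
      _ = 1 := by
          rw [Matrix.mul_assoc, hW₁G, Matrix.mul_nonsing_inv _ hdT₁]
  have hW₁M₁ : W₁ * ((G * W₁) ^ (km + 1) * G * T₁ ^ (km + 1)) = T₁⁻¹ := by
    rw [hM₁, hW₁G]
  -- canonical forms of AepW, AepW * W, AWGm
  have hAA : AepW = U * Matrix.fromBlocks G (0 : Matrix (Fin t) (Fin n') ℂ)
      (0 : Matrix (Fin q') (Fin t) ℂ) (0 : Matrix (Fin q') (Fin n') ℂ) * Vᴴ := by
    have hbl : Matrix.fromBlocks A₁ A₂ 0 A₃ *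
        ((Matrix.fromBlocks T₁⁻¹ 0 0 0 : Matrix (Fin t ⊕ Fin n') (Fin t ⊕ Fin n') ℂ) *
          (Matrix.fromBlocks T₁⁻¹ 0 0 0 : Matrix (Fin t ⊕ Fin n') (Fin t ⊕ Fin n') ℂ)) =
        Matrix.fromBlocks G 0 0 0 := by
      rw [Matrix.fromBlocks_multiply, Matrix.fromBlocks_multiply]
      simp [hGdef]
    rw [hAepW, hcep, hYdef, hA, sand3 V _ Vᴴ V _ Vᴴ hV2, sand3 U _ Vᴴ V _ Vᴴ hV2, hbl]
  have hAWW : AepW * W = U * Matrix.fromBlocks (G * W₁) (G * W₂) 0 0 * Uᴴ := by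
    have hbl : (Matrix.fromBlocks G (0 : Matrix (Fin t) (Fin n') ℂ)
        (0 : Matrix (Fin q') (Fin t) ℂ) (0 : Matrix (Fin q') (Fin n') ℂ)) *
        Matrix.fromBlocks W₁ W₂ 0 W₃ = Matrix.fromBlocks (G * W₁) (G * W₂) 0 0 := by
      rw [Matrix.fromBlocks_multiply]
      simp
    rw [hAA, hWdec, sand3 U _ Vᴴ V _ Uᴴ hV2, hbl]
  have hpowm : (AepW * W) ^ (km + 1) =
      U * Matrix.fromBlocks ((G * W₁) ^ (km + 1)) ((G * W₁) ^ km * (G * W₂)) 0 0 * Uᴴ := by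
    rw [hAWW, sandwich_pow U Uᴴ _ hU1 hU2, pow_block_succ]
  have hAWGm2 : AWGm = U * (Matrix.fromBlocks
      ((G * W₁) ^ (km + 1) * G * T₁ ^ (km + 1))
      ((G * W₁) ^ (km + 1) * G * ∑ j ∈ Finset.range (km + 1), T₁ ^ j * T₂ * N ^ (km + 1 - 1 - j))
      0 0 : Matrix (Fin t ⊕ Fin q') (Fin t ⊕ Fin n') ℂ) * Vᴴ := by
    have hbl1 : Matrix.fromBlocks ((G * W₁) ^ (km + 1)) ((G * W₁) ^ km * (G * W₂))
        (0 : Matrix (Fin q') (Fin t) ℂ) (0 : Matrix (Fin q') (Fin q') ℂ) *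
        (Matrix.fromBlocks G (0 : Matrix (Fin t) (Fin n') ℂ)
          (0 : Matrix (Fin q') (Fin t) ℂ) (0 : Matrix (Fin q') (Fin n') ℂ)) =
        Matrix.fromBlocks ((G * W₁) ^ (km + 1) * G) 0 0 0 := by
      rw [Matrix.fromBlocks_multiply]
      simp
    have hbl2 : (Matrix.fromBlocks ((G * W₁) ^ (km + 1) * G) (0 : Matrix (Fin t) (Fin n') ℂ)
        (0 : Matrix (Fin q') (Fin t) ℂ) (0 : Matrix (Fin q') (Fin n') ℂ)) *
        Matrix.fromBlocks (T₁ ^ (km + 1))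
          (∑ j ∈ Finset.range (km + 1), T₁ ^ j * T₂ * N ^ (km + 1 - 1 - j)) 0 (N ^ (km + 1)) =
        Matrix.fromBlocks ((G * W₁) ^ (km + 1) * G * T₁ ^ (km + 1))
          ((G * W₁) ^ (km + 1) * G * ∑ j ∈ Finset.range (km + 1), T₁ ^ j * T₂ * N ^ (km + 1 - 1 - j))
          0 0 := by
      rw [Matrix.fromBlocks_multiply]
      simp
    rw [hAWGm, hpowm, hAA, hTpow (km + 1), sand3 U _ Uᴴ U _ Vᴴ hU2, hbl1,
      sand3 U _ Vᴴ V _ Vᴴ hV2, hbl2]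
  -- final assembly
  have hid2 : W₁ * (G * W₁) ^ (km + 1) * G = (T₁ ^ (km + 1 + 1))⁻¹ := by
    have h := hK2
    simp only [← Matrix.mul_assoc] at h
    exact h
  have hTinvW : T₁⁻¹ * W₁ = A₁⁻¹ := by
    rw [hT₁def, Matrix.mul_inv_rev, Matrix.mul_assoc, Matrix.nonsing_inv_mul _ hW₁,
      Matrix.mul_one]
  have hid4 : (T₁ ^ (km + 1 + 1))⁻¹ * T₁ ^ (km + 1) = T₁⁻¹ := by
    rw [pow_succ, Matrix.mul_inv_rev, Matrix.mul_assoc,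
      Matrix.nonsing_inv_mul _ (hdT₁k (km + 1)), Matrix.mul_one]
  have hfinal : Matrix.fromBlocks W₁ W₂ (0 : Matrix (Fin n') (Fin t) ℂ) W₃ *
      Matrix.fromBlocks ((G * W₁) ^ (km + 1) * G * T₁ ^ (km + 1))
        ((G * W₁) ^ (km + 1) * G * ∑ j ∈ Finset.range (km + 1), T₁ ^ j * T₂ * N ^ (km + 1 - 1 - j))
        (0 : Matrix (Fin q') (Fin t) ℂ) (0 : Matrix (Fin q') (Fin n') ℂ) *
      Matrix.fromBlocks W₁ W₂ (0 : Matrix (Fin n') (Fin t) ℂ) W₃ *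
      Matrix.fromBlocks (1 : Matrix (Fin t) (Fin t) ℂ) (0 : Matrix (Fin t) (Fin q') ℂ)
        (0 : Matrix (Fin q') (Fin t) ℂ) (A₃ * A₃dag) =
      Matrix.fromBlocks A₁⁻¹
        (T₁⁻¹ * (W₂ * (A₃ * A₃dag)) + (T₁ ^ (km + 1 + 1))⁻¹ * (Bm * (W₃ * (A₃ * A₃dag))))
        (0 : Matrix (Fin n') (Fin t) ℂ) (0 : Matrix (Fin n') (Fin q') ℂ) := by
    rw [Matrix.fromBlocks_multiply, Matrix.fromBlocks_multiply, Matrix.fromBlocks_multiply]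
    simp only [Matrix.mul_zero, Matrix.zero_mul, add_zero, zero_add, Matrix.mul_one,
      Matrix.one_mul, Matrix.add_mul, hBm]
    simp only [← Matrix.mul_assoc, hid2, hid4, hTinvW]
  rw [hAWGMP, Matrix.mul_assoc (W * AWGm * W) A Adag, hPA, hAWGm2, hWdec,
    sand3 V _ Uᴴ U _ Vᴴ hU2, sand3 V _ Vᴴ V _ Uᴴ hV2, sand3 V _ Uᴴ U _ Uᴴ hU2, hfinal]
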